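/- The four-point set B = {b1, b2, b3, b4} = {√5−2, (3−√5)/2, (√5−1)/2, 3−√5} is invariant under the state dynamics induced by the conjectured policy: for each z∈B, with δ = δ̃(z) and γ = γ̃(z), both update values 2δ/(1+δ−γ) (the next state when the output is 0) and 1 − 2γ/(1−δ+γ) (the next state when the output is 1) belong to B. Specifically, the transitions are: from b1, outputs 0 and 1 lead to b3 and b1; from b2, to b4 and b1; from b3, to b4 and b1; and from b4, to b4 and b2. -/
import Mathlib

noncomputable def b1 : ℝ := Real.sqrt 5 - 2
noncomputable def b2 : ℝ := (3 - Real.sqrt 5) / 2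
noncomputable def b3 : ℝ := (Real.sqrt 5 - 1) / 2
noncomputable def b4 : ℝ := 3 - Real.sqrt 5

/-- The conjectured policy: the action parameter `δ̃(z)`. -/
noncomputable def deltat (z : ℝ) : ℝ :=
  if z ≤ b2 then z
  else if z ≤ b3 then (3 - Real.sqrt 5) / 2
  else ((Real.sqrt 5 - 1) / 2) * z

/-- The conjectured policy: the action parameter `γ̃(z)`. -/
noncomputable def gammat (z : ℝ) : ℝ :=
  if z ≤ b2 then ((Real.sqrt 5 - 1) / 2) * (1 - z)
  else if z ≤ b3 then (3 - Real.sqrt 5) / 2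
  else 1 - z

/-- The next state when the output is 0. -/
noncomputable def next0 (z : ℝ) : ℝ := 2 * deltat z / (1 + deltat z - gammat z)
/-- The next state when the output is 1. -/
noncomputable def next1 (z : ℝ) : ℝ := 1 - 2 * gammat z / (1 - deltat z + gammat z)

lemma hsq : Real.sqrt 5 ^ 2 = 5 := Real.sq_sqrt (by norm_num)
lemma hlb : (2:ℝ) < Real.sqrt 5 := by nlinarith [hsq, Real.sqrt_nonneg 5]
lemma hub : Real.sqrt 5 < 7/3 := by
  rw [show (7:ℝ)/3 = Real.sqrt ((7/3)^2) from (Real.sqrt_sq (by norm_num)).symm]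
  exact Real.sqrt_lt_sqrt (by norm_num) (by norm_num)

lemma hb1 : b1 ≤ b2 := by unfold b1 b2; nlinarith [hub]
lemma hb2 : b2 ≤ b2 := le_refl _
lemma hb3a : ¬ b3 ≤ b2 := by unfold b2 b3; push_neg; nlinarith [hlb]
lemma hb3b : b3 ≤ b3 := le_refl _
lemma hb4a : ¬ b4 ≤ b2 := by unfold b2 b4; push_neg; nlinarith [hlb, hub]
lemma hb4b : ¬ b4 ≤ b3 := by unfold b3 b4; push_neg; nlinarith [hlb, hub]

lemma e1 : next0 b1 = b3 := by
  unfold next0 deltat gammat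
  rw [if_pos hb1, if_pos hb1]
  unfold b1 b3
  have h := hsq; have h2 := hlb; have h3 := hub
  rw [div_eq_iff (by nlinarith)]
  nlinarith

lemma e2 : next1 b1 = b1 := by
  unfold next1 deltat gammat
  rw [if_pos hb1, if_pos hb1]
  unfold b1
  have h := hsq; have h2 := hlb; have h3 := hub
  have key : 2 * ((Real.sqrt 5 - 1) / 2 * (1 - (Real.sqrt 5 - 2))) /
      (1 - (Real.sqrt 5 - 2) + (Real.sqrt 5 - 1) / 2 * (1 - (Real.sqrt 5 - 2)))
      = 3 - Real.sqrt 5 := by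
    rw [div_eq_iff (by nlinarith)]; nlinarith
  rw [key]; ring

lemma e3 : next0 b2 = b4 := by
  unfold next0 deltat gammat
  rw [if_pos hb2, if_pos hb2]
  unfold b2 b4
  have h := hsq; have h2 := hlb; have h3 := hub
  rw [div_eq_iff (by nlinarith)]
  nlinarith

lemma e4 : next1 b2 = b1 := by
  unfold next1 deltat gammat
  rw [if_pos hb2, if_pos hb2]
  unfold b1 b2
  have h := hsq; have h2 := hlb; have h3 := hub
  have key : 2 * ((Real.sqrt 5 - 1) / 2 * (1 - (3 - Real.sqrt 5) / 2)) /
      (1 - (3 - Real.sqrt 5) / 2 + (Real.sqrt 5 - 1) / 2 * (1 - (3 - Real.sqrt 5) / 2))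
      = 3 - Real.sqrt 5 := by
    rw [div_eq_iff (by nlinarith)]; nlinarith
  rw [key]; ring

lemma e5 : next0 b3 = b4 := by
  unfold next0 deltat gammat
  rw [if_neg hb3a, if_pos hb3b, if_neg hb3a, if_pos hb3b]
  unfold b4
  have h := hsq; have h2 := hlb; have h3 := hub
  rw [div_eq_iff (by nlinarith)]
  ring

lemma e6 : next1 b3 = b1 := by
  unfold next1 deltat gammat
  rw [if_neg hb3a, if_pos hb3b, if_neg hb3a, if_pos hb3b]
  unfold b1
  have h := hsq; have h2 := hlb; have h3 := hub
  have key : 2 * ((3 - Real.sqrt 5) / 2) /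
      (1 - (3 - Real.sqrt 5) / 2 + (3 - Real.sqrt 5) / 2) = 3 - Real.sqrt 5 := by
    rw [div_eq_iff (by norm_num)]; ring
  rw [key]; ring

lemma e7 : next0 b4 = b4 := by
  unfold next0 deltat gammat
  rw [if_neg hb4a, if_neg hb4b, if_neg hb4a, if_neg hb4b]
  unfold b4
  have h := hsq; have h2 := hlb; have h3 := hub
  rw [div_eq_iff (by nlinarith)]
  nlinarith

lemma e8 : next1 b4 = b2 := by
  unfold next1 deltat gammat
  rw [if_neg hb4a, if_neg hb4b, if_neg hb4a, if_neg hb4b]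
  unfold b2 b4
  have h := hsq; have h2 := hlb; have h3 := hub
  have key : 2 * (1 - (3 - Real.sqrt 5)) /
      (1 - (Real.sqrt 5 - 1) / 2 * (3 - Real.sqrt 5) + (1 - (3 - Real.sqrt 5)))
      = (Real.sqrt 5 - 1) / 2 := by
    rw [div_eq_iff (by nlinarith)]; nlinarith
  rw [key]; ring

/-- The four-point set `B = {b1, b2, b3, b4}` is invariant under the state dynamics induced
by the conjectured policy, with the transitions: from `b1`, outputs 0 and 1 lead to `b3`
and `b1`; from `b2`, to `b4` and `b1`; from `b3`, to `b4` and `b1`; from `b4`, to `b4`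
and `b2`. -/
theorem four_point_set_invariant :
    (∀ z ∈ ({b1, b2, b3, b4} : Set ℝ),
      next0 z ∈ ({b1, b2, b3, b4} : Set ℝ) ∧ next1 z ∈ ({b1, b2, b3, b4} : Set ℝ)) ∧
    next0 b1 = b3 ∧ next1 b1 = b1 ∧
    next0 b2 = b4 ∧ next1 b2 = b1 ∧
    next0 b3 = b4 ∧ next1 b3 = b1 ∧
    next0 b4 = b4 ∧ next1 b4 = b2 := by
  refine ⟨?_, e1, e2, e3, e4, e5, e6, e7, e8⟩
  rintro z (rfl | rfl | rfl | rfl) <;>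
    simp [e1, e2, e3, e4, e5, e6, e7, e8, Set.mem_insert_iff]
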